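/- Let S be a commutative ring, ∂ : S → S a derivation, and ∫ : S → S an additive map with ∂(∫ f) = f for all f ∈ S and ∫(c*f) = c*(∫ f) for all c ∈ ker ∂ and f ∈ S (so (S, ∂, ∫) is a commutative integro-differential ring). Let R be a subring of S with ∂(R) ⊆ R, and C := R ∩ ker ∂. Let Q : R → R be additive with Q(c*f) = c*(Q f) for all c ∈ C and f ∈ R, and with ∂(Q(∂ f)) = ∂ f and Q(∂(Q f)) = Q f for all f ∈ R (a quasi-integration on R). Let a : I → R be a family with Q(a i) = 0 for all i ∈ I, and assume: (1) the family a is linearly independent over C (with R viewed as a C-module); (2) there is a C-submodule N of R with Submodule.span C (Set.range a) ⊓ N = ⊥ and Submodule.span C (Set.range a) ⊔ N = {f ∈ R | Q f = 0} (the C-span of the a i is complemented in ker Q); (3) for every nonzero r ∈ R there exist n ∈ ℕ and b_0, …, b_n ∈ R such that Σ_{i=0}^{n} b_i * ∂^[i](r) is a nonzero element of C (every nonzero differential ideal of R contains a nonzero constant). Define σ : List I → S by σ([]) = 1 and σ(i :: W) = ∫((a i) * σ(W)). Then the family (σ W)_{W : List I} of nested integrals is linearly independent over R, with S viewed as an R-module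 via the inclusion R ⊆ S. -/

import Mathlib

/-! Differentiating a relation `∑ c_W σ(W) = 0` gives another one, since `∂ σ(i :: V) = a_i σ(V)`,
and on words of maximal length the coefficients are simply differentiated. Among relations of
maximal length `n + 1`, take one with the fewest nonzero top coefficients. Condition (3) replaces
it by a combination of its derivatives whose coefficient at a top word `i₀ :: V₀` is a nonzero
constant; differentiating once more kills that coefficient, so by minimality the derivative is the
trivial relation. Its coefficient at `V₀` reads `∂ c_{V₀} + ∑ c_{i :: V₀} a_i = 0` with constants
`c_{i :: V₀}`; applying `Q` gives `∂ c_{V₀} = 0`, and the independence of the `a_i` then forces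
`c_{i₀ :: V₀} = 0`, a contradiction. -/

/-- Nested integral `σ(W) = ∫ a_{w₁} ∫ a_{w₂} ⋯ ∫ a_{w_k}` of the word `W` over the
family of integrands `a`. -/
def nestedIntWord {S : Type*} [CommRing S] {I : Type*} (intg : S → S) (a : I → S) :
    List I → S
  | [] => 1
  | i :: W => intg (a i * nestedIntWord intg a W)

/-- `x` is a `C`-linear combination of the `a i`, where `C = R ∩ ker der`. -/
def InConstSpan {S : Type*} [CommRing S] {I : Type*} (der : S → S) (R : Subring S)
    (a : I → S) (x : S) : Prop :=
  ∃ (t : Finset I) (c : I → S), (∀ i : I, c i ∈ R ∧ der (c i) = 0) ∧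
    x = ∑ i ∈ t, c i * a i

namespace NestedIntegral

open Finset Finsupp

variable {S : Type*} [CommRing S] {I : Type*}

def headIntegrand (a : I → S) : List I → S
  | [] => 0
  | i :: _ => a i

section Derivative

variable (d : Derivation ℤ S S) {intg : S → S} (a : I → S)

theorem derivation_nestedIntWord (hsection : ∀ f, d (intg f) = f) (W : List I) :
    d (nestedIntWord intg a W) = headIntegrand a W * nestedIntWord intg a W.tail := by
  cases W with
  | nil => simp [nestedIntWord, headIntegrand]
  | cons i V => simp [nestedIntWord, headIntegrand, hsection]

noncomputable def derivCoeffs (c : List I →₀ S) : List I →₀ S :=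
  c.mapRange d (map_zero d) + c.sum fun W r => single W.tail (r * headIntegrand a W)

theorem linearCombination_derivCoeffs (hsection : ∀ f, d (intg f) = f) (c : List I →₀ S) :
    linearCombination S (nestedIntWord intg a) (derivCoeffs d a c) =
      d (linearCombination S (nestedIntWord intg a) c) := by
  simp only [derivCoeffs, map_add, map_finsuppSum, linearCombination_apply]
  rw [sum_mapRange_index (by simp), ← Finsupp.sum_add]
  refine Finsupp.sum_congr fun W _ => ?_
  simp only [smul_eq_mul, Derivation.leibniz, derivation_nestedIntWord d a hsection]
  rw [sum_single_index (zero_mul _)]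
  ring

theorem cons_injOn_preimage (V : List I) (s : Finset (List I)) :
    Set.InjOn (· :: V) ((· :: V) ⁻¹' ↑s) := fun _ _ _ _ h => List.head_eq_of_cons_eq h

theorem derivCoeffs_apply (c : List I →₀ S) (V : List I) :
    derivCoeffs d a c V =
      d (c V) + ∑ i ∈ c.support.preimage (· :: V) (cons_injOn_preimage V _), c (i :: V) * a i := by
  classical
  simp only [derivCoeffs, Finsupp.add_apply, mapRange_apply, Finsupp.sum_apply, single_apply]
  rw [Finsupp.sum, ← Finset.sum_preimage (· :: V) _ (cons_injOn_preimage V _)]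
  · simp [headIntegrand]
  · rintro (_ | ⟨j, U⟩) _ hW
    · simp [headIntegrand]
    · rw [List.tail_cons, if_neg]
      rintro rfl
      exact hW ⟨j, rfl⟩

theorem derivCoeffs_apply_of_mem_supported {c : List I →₀ S} {V : List I}
    (hc : c ∈ supported S S {W : List I | W.length ≤ V.length}) :
    derivCoeffs d a c V = d (c V) := by
  rw [derivCoeffs_apply, add_eq_left]
  refine Finset.sum_eq_zero fun i hi => absurd (hc (Finset.mem_preimage.mp hi)) ?_
  simp

theorem mapsTo_derivCoeffs_supported (n : ℕ) :
    Set.MapsTo (derivCoeffs d a) (supported S S {W : List I | W.length ≤ n})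
      (supported S S {W : List I | W.length ≤ n}) := by
  intro c hc V hV
  rw [Set.mem_ofPred_eq]
  by_contra! hlong
  have hcV : c V = 0 := Finsupp.notMem_support_iff.mp fun h => hlong.not_ge (hc h)
  have hle : c ∈ supported S S {W : List I | W.length ≤ V.length} :=
    supported_mono (fun _ hW => le_trans hW hlong.le) hc
  exact Finsupp.mem_support_iff.mp hV (by
    rw [derivCoeffs_apply_of_mem_supported d a hle, hcV, map_zero])

theorem iterate_derivCoeffs_apply_of_mem_supported {c : List I →₀ S} {V : List I}
    (hc : c ∈ supported S S {W : List I | W.length ≤ V.length}) (k : ℕ) :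
    (derivCoeffs d a)^[k] c V = d^[k] (c V) := by
  induction k generalizing c with
  | zero => rfl
  | succ k ih =>
    rw [Function.iterate_succ_apply, Function.iterate_succ_apply,
      ih (mapsTo_derivCoeffs_supported d a _ hc), derivCoeffs_apply_of_mem_supported d a hc]

theorem mapsTo_derivCoeffs_subring {R : Subring S} (hdR : ∀ f ∈ R, d f ∈ R)
    (haR : ∀ i, a i ∈ R) :
    Set.MapsTo (derivCoeffs d a) {c | ∀ W, c W ∈ R} {c | ∀ W, c W ∈ R} := by
  intro c hc V
  rw [derivCoeffs_apply]
  exact add_mem (hdR _ (hc V)) (sum_mem fun i _ => mul_mem (hc _) (haR i))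

end Derivative

section QuasiIntegration

variable (d : Derivation ℤ S S) (a : I → S) {R : Subring S} {Q : S → S}

theorem quasiInt_sum_const_mul_eq_zero (haR : ∀ i, a i ∈ R)
    (hQadd : ∀ f ∈ R, ∀ g ∈ R, Q (f + g) = Q f + Q g)
    (hQlin : ∀ c ∈ R, ∀ f ∈ R, d c = 0 → Q (c * f) = c * Q f) (haQ : ∀ i, Q (a i) = 0)
    (s : Finset I) {c : I → S} (hc : ∀ i, c i ∈ R ∧ d (c i) = 0) :
    Q (∑ i ∈ s, c i * a i) = 0 := by
  classical
  induction s using Finset.induction_on with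
  | empty => simpa using hQadd 0 R.zero_mem 0 R.zero_mem
  | insert j s hj ih =>
    rw [sum_insert hj, hQadd _ (mul_mem (hc j).1 (haR j)) _
      (sum_mem fun i _ => mul_mem (hc i).1 (haR i)), hQlin _ (hc j).1 _ (haR j) (hc j).2, haQ,
      mul_zero, zero_add, ih]

theorem const_eq_zero_of_sum_const_mul_eq_derivation (haR : ∀ i, a i ∈ R)
    (hQadd : ∀ f ∈ R, ∀ g ∈ R, Q (f + g) = Q f + Q g)
    (hQlin : ∀ c ∈ R, ∀ f ∈ R, d c = 0 → Q (c * f) = c * Q f)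
    (hQ1 : ∀ f ∈ R, d (Q (d f)) = d f) (haQ : ∀ i, Q (a i) = 0)
    (hindep : ∀ (t : Finset I) (c : I → S), (∀ i, c i ∈ R ∧ d (c i) = 0) →
      ∑ i ∈ t, c i * a i = 0 → ∀ i ∈ t, c i = 0) :
    ∀ f ∈ R, ∀ (s : Finset I) (c : I → S), (∀ i, c i ∈ R ∧ d (c i) = 0) →
      ∑ i ∈ s, c i * a i = d f → ∀ i ∈ s, c i = 0 := by
  intro f hf s c hc h
  have hdf : d f = 0 := by
    rw [← hQ1 f hf, ← h, quasiInt_sum_const_mul_eq_zero d a haR hQadd hQlin haQ s hc, map_zero]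
  exact hindep s c hc (h.trans hdf)

end QuasiIntegration

section Independence

variable (d : Derivation ℤ S S) {intg : S → S} (a : I → S) {R : Subring S}

theorem coeff_cons_eq_zero_of_derivCoeffs_eq_zero
    (hindep : ∀ f ∈ R, ∀ (s : Finset I) (c : I → S), (∀ i, c i ∈ R ∧ d (c i) = 0) →
      ∑ i ∈ s, c i * a i = d f → ∀ i ∈ s, c i = 0)
    {c : List I →₀ S} (hR : ∀ W, c W ∈ R) {V : List I}
    (hc : c ∈ supported S S {W : List I | W.length ≤ V.length + 1})
    (h : derivCoeffs d a c = 0) (i : I) : c (i :: V) = 0 := by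
  have hconst : ∀ j, d (c (j :: V)) = 0 := fun j => by
    rw [← derivCoeffs_apply_of_mem_supported d a (V := j :: V) hc, h, Finsupp.zero_apply]
  have hV := derivCoeffs_apply d a c V
  rw [h, Finsupp.zero_apply, eq_comm] at hV
  by_cases hi : i ∈ c.support.preimage (· :: V) (cons_injOn_preimage V _)
  · refine hindep (-c V) (neg_mem (hR V)) _ _ (fun j => ⟨hR _, hconst j⟩) ?_ i hi
    rw [map_neg]
    linear_combination hV
  · simpa using hi

theorem exists_relation_const_coeff (hdR : ∀ f ∈ R, d f ∈ R) (haR : ∀ i, a i ∈ R)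
    (hsection : ∀ f, d (intg f) = f)
    (hconst : ∀ r ∈ R, r ≠ 0 → ∃ (n : ℕ) (b : ℕ → S), (∀ i, b i ∈ R) ∧
      d (∑ i ∈ range (n + 1), b i * d^[i] r) = 0 ∧ ∑ i ∈ range (n + 1), b i * d^[i] r ≠ 0)
    {n : ℕ} {c : List I →₀ S} (hc : c ∈ supported S S {W : List I | W.length ≤ n})
    (hR : ∀ W, c W ∈ R) (hrel : linearCombination S (nestedIntWord intg a) c = 0)
    {W₀ : List I} (hW₀ : W₀.length = n) (hcW₀ : c W₀ ≠ 0) :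
    ∃ c' ∈ supported S S {W : List I | W.length ≤ n}, (∀ W, c' W ∈ R) ∧
      linearCombination S (nestedIntWord intg a) c' = 0 ∧ c' W₀ ≠ 0 ∧ d (c' W₀) = 0 ∧
      ∀ V : List I, V.length = n → c V = 0 → c' V = 0 := by
  obtain ⟨N, b, hbR, hdconst, hconst_ne⟩ := hconst (c W₀) (hR W₀) hcW₀
  have htop : ∀ V : List I, V.length = n →
      (∑ k ∈ range (N + 1), b k • (derivCoeffs d a)^[k] c) V =
        ∑ k ∈ range (N + 1), b k * d^[k] (c V) := by
    rintro V rfl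
    simp only [finsetSum_apply, Finsupp.smul_apply, smul_eq_mul,
      iterate_derivCoeffs_apply_of_mem_supported d a hc]
  refine ⟨∑ k ∈ range (N + 1), b k • (derivCoeffs d a)^[k] c,
    sum_mem fun k _ => Submodule.smul_mem _ _ ((mapsTo_derivCoeffs_supported d a n).iterate k hc),
    fun W => ?_, ?_, by rw [htop W₀ hW₀]; exact hconst_ne, by rw [htop W₀ hW₀]; exact hdconst,
    fun V hV hcV => ?_⟩
  · rw [finsetSum_apply]
    exact sum_mem fun k _ =>
      mul_mem (hbR k) ((mapsTo_derivCoeffs_subring d a hdR haR).iterate k hR W)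
  · rw [map_sum]
    refine sum_eq_zero fun k _ => ?_
    rw [map_smul, Function.Semiconj.iterate_right (linearCombination_derivCoeffs d a hsection) k c,
      hrel, iterate_map_zero, smul_zero]
  · simp [htop V hV, hcV, iterate_map_zero]

theorem eq_zero_of_mem_supported_length_le_zero {c : List I →₀ S}
    (hc : c ∈ supported S S {W : List I | W.length ≤ 0})
    (hrel : linearCombination S (nestedIntWord intg a) c = 0) : c = 0 := by
  have hsingle : c = single [] (c []) := by
    ext (_ | ⟨i, V⟩)
    · simp
    · rw [single_apply, if_neg (List.cons_ne_nil i V).symm]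
      exact Finsupp.notMem_support_iff.mp fun h => by simpa using hc h
  rw [hsingle, linearCombination_single, nestedIntWord, smul_eq_mul, mul_one] at hrel
  rw [hsingle, hrel, single_zero]

theorem eq_zero_of_mem_supported_length_le_succ (hdR : ∀ f ∈ R, d f ∈ R) (haR : ∀ i, a i ∈ R)
    (hsection : ∀ f, d (intg f) = f)
    (hindep : ∀ f ∈ R, ∀ (s : Finset I) (c : I → S), (∀ i, c i ∈ R ∧ d (c i) = 0) →
      ∑ i ∈ s, c i * a i = d f → ∀ i ∈ s, c i = 0)
    (hconst : ∀ r ∈ R, r ≠ 0 → ∃ (n : ℕ) (b : ℕ → S), (∀ i, b i ∈ R) ∧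
      d (∑ i ∈ range (n + 1), b i * d^[i] r) = 0 ∧ ∑ i ∈ range (n + 1), b i * d^[i] r ≠ 0)
    {n : ℕ}
    (ih : ∀ c ∈ supported S S {W : List I | W.length ≤ n}, (∀ W, c W ∈ R) →
      linearCombination S (nestedIntWord intg a) c = 0 → c = 0)
    (c : List I →₀ S) (hc : c ∈ supported S S {W : List I | W.length ≤ n + 1})
    (hR : ∀ W, c W ∈ R) (hrel : linearCombination S (nestedIntWord intg a) c = 0) : c = 0 := by
  classical
  induction hm : #{W ∈ c.support | W.length = n + 1} using Nat.strong_induction_on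
    generalizing c with
  | _ m ihm =>
  by_contra hne
  obtain ⟨W₀, hW₀, hlen⟩ : ∃ W ∈ c.support, W.length = n + 1 := by
    by_contra! hshort
    exact hne (ih c (fun W hW => Nat.le_of_lt_succ ((hc hW).lt_of_ne (hshort W hW))) hR hrel)
  obtain ⟨c', hc', hc'R, hc'rel, hc'W₀, hdc'W₀, hc'top⟩ := exists_relation_const_coeff d a hdR haR
    hsection hconst hc hR hrel hlen (Finsupp.mem_support_iff.mp hW₀)
  have hfewer : {V ∈ (derivCoeffs d a c').support | V.length = n + 1} ⊆
      {W ∈ c.support | W.length = n + 1}.erase W₀ := by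
    intro V hV
    obtain ⟨hV, hVlen⟩ := mem_filter.mp hV
    rw [Finsupp.mem_support_iff, derivCoeffs_apply_of_mem_supported d a (by rwa [hVlen])] at hV
    refine mem_erase.mpr ⟨by rintro rfl; exact hV hdc'W₀, mem_filter.mpr ⟨?_, hVlen⟩⟩
    exact Finsupp.mem_support_iff.mpr fun hcV => hV (by rw [hc'top V hVlen hcV, map_zero])
  have hdc' : derivCoeffs d a c' = 0 :=
    ihm _ (hm ▸ (card_le_card hfewer).trans_lt (card_erase_lt_of_mem (mem_filter.mpr ⟨hW₀, hlen⟩)))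
      _ (mapsTo_derivCoeffs_supported d a _ hc') (mapsTo_derivCoeffs_subring d a hdR haR hc'R)
      (by rw [linearCombination_derivCoeffs d a hsection, hc'rel, map_zero]) rfl
  obtain ⟨i₀, V₀, rfl⟩ := List.exists_cons_of_length_eq_add_one hlen
  exact hc'W₀ (coeff_cons_eq_zero_of_derivCoeffs_eq_zero d a hindep hc'R
    (by rwa [show V₀.length = n by simpa using hlen]) hdc' i₀)

theorem eq_zero_of_linearCombination_nestedIntWord_eq_zero (hdR : ∀ f ∈ R, d f ∈ R)
    (haR : ∀ i, a i ∈ R) (hsection : ∀ f, d (intg f) = f)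
    (hindep : ∀ f ∈ R, ∀ (s : Finset I) (c : I → S), (∀ i, c i ∈ R ∧ d (c i) = 0) →
      ∑ i ∈ s, c i * a i = d f → ∀ i ∈ s, c i = 0)
    (hconst : ∀ r ∈ R, r ≠ 0 → ∃ (n : ℕ) (b : ℕ → S), (∀ i, b i ∈ R) ∧
      d (∑ i ∈ range (n + 1), b i * d^[i] r) = 0 ∧ ∑ i ∈ range (n + 1), b i * d^[i] r ≠ 0)
    {c : List I →₀ S} (hR : ∀ W, c W ∈ R)
    (hrel : linearCombination S (nestedIntWord intg a) c = 0) : c = 0 := by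
  suffices ∀ n, ∀ c ∈ supported S S {W : List I | W.length ≤ n}, (∀ W, c W ∈ R) →
      linearCombination S (nestedIntWord intg a) c = 0 → c = 0 from
    this (c.support.sup List.length) c (fun _ hW => le_sup (f := List.length) hW) hR hrel
  intro n
  induction n with
  | zero => exact fun c hc _ => eq_zero_of_mem_supported_length_le_zero a hc
  | succ n ih => exact eq_zero_of_mem_supported_length_le_succ d a hdR haR hsection hindep hconst ih

end Independence

end NestedIntegral

theorem stmt_8_general {S : Type*} [CommRing S] {I : Type*} (der intg : S → S)
    (hder_add : ∀ f g : S, der (f + g) = der f + der g)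
    (hleibniz : ∀ f g : S, der (f * g) = der f * g + f * der g)
    (hsection : ∀ f : S, der (intg f) = f)
    (R : Subring S) (hRder : ∀ f ∈ R, der f ∈ R)
    (Q : S → S)
    (hQadd : ∀ f ∈ R, ∀ g ∈ R, Q (f + g) = Q f + Q g)
    (hQlin : ∀ c ∈ R, ∀ f ∈ R, der c = 0 → Q (c * f) = c * Q f)
    (hQ1 : ∀ f ∈ R, der (Q (der f)) = der f)
    (a : I → S) (haR : ∀ i : I, a i ∈ R) (haQ : ∀ i : I, Q (a i) = 0)
    -- (1) the family `a` is linearly independent over `C`: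
    (hindep : ∀ (t : Finset I) (c : I → S), (∀ i : I, c i ∈ R ∧ der (c i) = 0) →
      (∑ i ∈ t, c i * a i) = 0 → ∀ i ∈ t, c i = 0)
    -- (3) every nonzero differential ideal of `R` contains a nonzero constant:
    (hconst : ∀ r ∈ R, r ≠ 0 → ∃ (n : ℕ) (b : ℕ → S), (∀ i : ℕ, b i ∈ R) ∧
      der (∑ i ∈ Finset.range (n + 1), b i * der^[i] r) = 0 ∧
      (∑ i ∈ Finset.range (n + 1), b i * der^[i] r) ≠ 0) :
    -- conclusion: the nested integrals are linearly independent over `R`: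
    ∀ (t : Finset (List I)) (r : List I → S), (∀ W : List I, r W ∈ R) →
      (∑ W ∈ t, r W * nestedIntWord intg a W) = 0 → ∀ W ∈ t, r W = 0 := by
  classical
  let d : Derivation ℤ S S := Derivation.mk' (AddMonoidHom.mk' der hder_add).toIntLinearMap
    fun f g => by simp [hleibniz, smul_eq_mul]; ring
  intro t r hr hsum W hW
  let c := Finsupp.onFinset t (fun W => if W ∈ t then r W else 0) fun W h => by
    by_contra hW; exact h (if_neg hW)
  have hc : c = 0 :=
    NestedIntegral.eq_zero_of_linearCombination_nestedIntWord_eq_zero d a hRder haR hsection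
      (NestedIntegral.const_eq_zero_of_sum_const_mul_eq_derivation d a haR hQadd hQlin hQ1 haQ
        hindep) hconst
      (fun W => by by_cases hW : W ∈ t <;> simp [c, hW, hr W])
      (by
        rw [Finsupp.linearCombination_onFinset, ← hsum]
        exact Finset.sum_congr rfl fun W hW => by simp [hW])
  simpa [c, hW] using DFunLike.congr_fun hc W

/-- In a commutative integro-differential ring `(S, der, intg)` with a
differential subring `R` carrying a quasi-integration `Q`, if the integrands `a i ∈ ker Q`
are linearly independent over the constants `C = R ∩ ker der`, their `C`-span is complemented
in `ker Q`, and every nonzero differential ideal of `R` contains a nonzero constant, then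
the nested integrals `σ(W)`, for words `W`, are linearly independent over `R`. -/
theorem stmt_8 {S : Type*} [CommRing S] {I : Type*} (der intg : S → S)
    (hder_add : ∀ f g : S, der (f + g) = der f + der g)
    (hleibniz : ∀ f g : S, der (f * g) = der f * g + f * der g)
    (hintg_add : ∀ f g : S, intg (f + g) = intg f + intg g)
    (hsection : ∀ f : S, der (intg f) = f)
    (hintg_lin : ∀ c f : S, der c = 0 → intg (c * f) = c * intg f)
    (R : Subring S) (hRder : ∀ f ∈ R, der f ∈ R)
    (Q : S → S) (hQmem : ∀ f ∈ R, Q f ∈ R)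
    (hQadd : ∀ f ∈ R, ∀ g ∈ R, Q (f + g) = Q f + Q g)
    (hQlin : ∀ c ∈ R, ∀ f ∈ R, der c = 0 → Q (c * f) = c * Q f)
    (hQ1 : ∀ f ∈ R, der (Q (der f)) = der f)
    (hQ2 : ∀ f ∈ R, Q (der (Q f)) = Q f)
    (a : I → S) (haR : ∀ i : I, a i ∈ R) (haQ : ∀ i : I, Q (a i) = 0)
    -- (1) the family `a` is linearly independent over `C`:
    (hindep : ∀ (t : Finset I) (c : I → S), (∀ i : I, c i ∈ R ∧ der (c i) = 0) →
      (∑ i ∈ t, c i * a i) = 0 → ∀ i ∈ t, c i = 0)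
    -- (2) the `C`-span of the `a i` is complemented in `ker Q` by a `C`-submodule `N`:
    (hcompl : ∃ N : Set S, N ⊆ (R : Set S) ∧ (0 : S) ∈ N ∧
      (∀ x ∈ N, ∀ y ∈ N, x + y ∈ N) ∧
      (∀ c ∈ R, der c = 0 → ∀ x ∈ N, c * x ∈ N) ∧
      (∀ x : S, InConstSpan der R a x → x ∈ N → x = 0) ∧
      (∀ x : S, (x ∈ R ∧ Q x = 0) ↔
        ∃ s : S, InConstSpan der R a s ∧ ∃ y ∈ N, x = s + y))
    -- (3) every nonzero differential ideal of `R` contains a nonzero constant: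
    (hconst : ∀ r ∈ R, r ≠ 0 → ∃ (n : ℕ) (b : ℕ → S), (∀ i : ℕ, b i ∈ R) ∧
      der (∑ i ∈ Finset.range (n + 1), b i * der^[i] r) = 0 ∧
      (∑ i ∈ Finset.range (n + 1), b i * der^[i] r) ≠ 0) :
    -- conclusion: the nested integrals are linearly independent over `R`:
    ∀ (t : Finset (List I)) (r : List I → S), (∀ W : List I, r W ∈ R) →
      (∑ W ∈ t, r W * nestedIntWord intg a W) = 0 → ∀ W ∈ t, r W = 0 :=
  stmt_8_general der intg hder_add hleibniz hsection R hRder Q hQadd hQlin hQ1 a haR haQ hindep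
    hconst
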